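/- Fix an integer d ≥ 2 and let m = d − 2. For every n ≥ 0, the corridor number c^{(m)}_n satisfies c^{(m)}_n = σ_{n,⌊n/2⌋} − σ_{n,⌊(n+d)/2⌋}, where σ is the circular Pascal array of order d. -/

import Mathlib

/-- Binomial coefficient `C(n,x)` with integer lower argument, zero when `x < 0` or `x > n`. -/
noncomputable def binomZ (n : ℕ) (x : ℤ) : ℕ := if 0 ≤ x then n.choose x.toNat else 0

/-- Circular Pascal array of order `d` with initial offset `y0`:
`σ_{n,k} = Σ_{i=0}^{y0} Σ_{j∈ℤ} C(n, k − i + d·j)`. -/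
noncomputable def circPascal (d y0 n : ℕ) (k : ℤ) : ℕ :=
  ∑ i ∈ Finset.range (y0 + 1), ∑ᶠ j : ℤ, binomZ n (k - i + d * j)

/-- Corridor number of order `m`: the number of ±1 sequences of length `n` all of whose
partial sums, shifted by `y0`, stay in `{0,…,m}`. -/
noncomputable def corridorCount (m n y0 : ℕ) : ℕ :=
  Nat.card {r : Fin n → ℤ // (∀ i, r i = 1 ∨ r i = -1) ∧
    ∀ j : Fin n, 0 ≤ (y0 : ℤ) + ∑ i ∈ Finset.Iic j, r i ∧
      (y0 : ℤ) + ∑ i ∈ Finset.Iic j, r i ≤ (m : ℤ)}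

/-!
Write `σ_n(x) = Σ_j C(n, x + dj)`: it satisfies Pascal's rule, is `d`-periodic and is symmetric
under `x ↦ n - x`. Splitting off the first step, the number `c_n(y)` of corridor walks from height
`y` satisfies `c_{n+1}(y) = c_n(y + 1) + c_n(y - 1)`, where the walls `y = -1` and `y = d - 1`
contribute nothing, and `c_0(y) = 1`. The difference of block sums
`G_n(y) = Σ_{⌊(n-y+1)/2⌋ ≤ x ≤ ⌊(n+y+1)/2⌋} σ_n(x) - Σ_{⌊(n+d-y)/2⌋ ≤ x ≤ ⌊(n+d+y)/2⌋} σ_n(x)`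
obeys the same recursion by Pascal's rule, and the same boundary values: at `y = -1` both blocks
are empty, at `y = d - 1` both are full periods. At `y = 0` the blocks are single terms, which by
symmetry are the two terms of the theorem.
-/

open Finset

lemma binomZ_natCast (n k : ℕ) : binomZ n k = n.choose k := by
  simp [binomZ]

lemma binomZ_of_neg (n : ℕ) {x : ℤ} (hx : x < 0) : binomZ n x = 0 := by
  simp [binomZ, hx.not_ge]

lemma binomZ_of_lt {n : ℕ} {x : ℤ} (hx : n < x) : binomZ n x = 0 := by
  lift x to ℕ using by omega
  rw [binomZ_natCast, Nat.choose_eq_zero_of_lt (by omega)]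

lemma binomZ_zero_left (x : ℤ) : binomZ 0 x = if x = 0 then 1 else 0 := by
  rcases lt_or_ge x 0 with hx | hx
  · rw [binomZ_of_neg 0 hx, if_neg hx.ne]
  · lift x to ℕ using hx
    simp only [binomZ_natCast, Nat.cast_eq_zero]
    cases x <;> simp

lemma binomZ_succ (n : ℕ) (x : ℤ) : binomZ (n + 1) x = binomZ n x + binomZ n (x - 1) := by
  rcases lt_or_ge x 0 with hx | hx
  · simp [binomZ_of_neg _ hx, binomZ_of_neg _ (show x - 1 < 0 by omega)]
  · lift x to ℕ using hx
    cases x with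
    | zero => rw [binomZ_natCast, binomZ_natCast, binomZ_of_neg _ (by omega)]; simp
    | succ k =>
      rw [show ((k + 1 : ℕ) : ℤ) - 1 = k by omega, binomZ_natCast, binomZ_natCast, binomZ_natCast,
        Nat.choose_succ_succ', add_comm]

lemma binomZ_sub (n : ℕ) (x : ℤ) : binomZ n (n - x) = binomZ n x := by
  rcases lt_or_ge x 0 with hx | hx
  · rw [binomZ_of_neg n hx, binomZ_of_lt (by omega)]
  rcases lt_or_ge (n : ℤ) x with hxn | hxn
  · rw [binomZ_of_lt hxn, binomZ_of_neg n (by omega)]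
  lift x to ℕ using hx
  rw [← Nat.cast_sub (by omega), binomZ_natCast, binomZ_natCast, Nat.choose_symm (by omega)]

noncomputable def circBinom (d n : ℕ) (x : ℤ) : ℕ := ∑ᶠ j : ℤ, binomZ n (x + d * j)

lemma circPascal_zero (d n : ℕ) (x : ℤ) : circPascal d 0 n x = circBinom d n x := by
  simp [circPascal, circBinom]

lemma finite_support_binomZ_add_mul {d : ℕ} (hd : d ≠ 0) (n : ℕ) (x : ℤ) :
    (Function.support fun j : ℤ ↦ binomZ n (x + d * j)).Finite := by
  refine ((Set.finite_Icc (0 : ℤ) n).preimage (f := fun j ↦ x + d * j) ?_).subset ?_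
  · intro i _ j _ hij
    simpa [hd] using hij
  · intro j hj
    by_contra hout
    rw [Set.mem_preimage, Set.mem_Icc, not_and_or, not_le, not_le] at hout
    rcases hout with h | h
    · exact hj (binomZ_of_neg n h)
    · exact hj (binomZ_of_lt h)

lemma circBinom_succ {d : ℕ} (hd : d ≠ 0) (n : ℕ) (x : ℤ) :
    circBinom d (n + 1) x = circBinom d n x + circBinom d n (x - 1) := by
  rw [circBinom, circBinom, circBinom, ← finsum_add_distrib (finite_support_binomZ_add_mul hd n x)
    (finite_support_binomZ_add_mul hd n (x - 1))]
  exact finsum_congr fun j ↦ by rw [binomZ_succ, sub_add_eq_add_sub]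

lemma circBinom_periodic (d n : ℕ) : Function.Periodic (circBinom d n) d := fun x ↦ by
  rw [circBinom, circBinom, ← finsum_comp_equiv (Equiv.addRight (1 : ℤ))
    (f := fun j ↦ binomZ n (x + d * j))]
  exact finsum_congr fun j ↦ by simp only [Equiv.coe_addRight]; ring_nf

lemma circBinom_sub (d n : ℕ) (x : ℤ) : circBinom d n (n - x) = circBinom d n x := by
  rw [circBinom, circBinom, ← finsum_comp_equiv (Equiv.neg ℤ)]
  exact finsum_congr fun j ↦ by rw [Equiv.neg_apply, ← binomZ_sub]; ring_nf

lemma circBinom_zero_left {d : ℕ} (hd : d ≠ 0) (x : ℤ) :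
    circBinom d 0 x = if (d : ℤ) ∣ x then 1 else 0 := by
  simp only [circBinom, binomZ_zero_left]
  split_ifs with hdvd
  · obtain ⟨k, rfl⟩ := hdvd
    rw [finsum_eq_single _ (-k) fun j hj ↦ if_neg ?_]
    · simp
    · rw [← mul_add]
      exact mul_ne_zero (by exact_mod_cast hd) (by omega)
  · exact finsum_eq_zero_of_forall_eq_zero fun j ↦
      if_neg fun h ↦ hdvd ⟨-j, by linear_combination h⟩

lemma sum_Icc_add_sum_Icc_sub_one {M : Type*} [AddCommMonoid M] (f : ℤ → M) {l r : ℤ}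
    (h : l ≤ r) :
    ∑ x ∈ Icc l r, f x + ∑ x ∈ Icc (l - 1) (r - 1), f x =
      ∑ x ∈ Icc (l - 1) r, f x + ∑ x ∈ Icc l (r - 1), f x := by
  rw [← insert_Icc_left_eq_Icc_sub_one (by omega), ← insert_Icc_left_eq_Icc_sub_one (by omega),
    sum_insert (by simp), sum_insert (by simp), add_left_comm, add_assoc]

lemma Function.Periodic.sum_Ico_add_eq {M : Type*} [AddCancelCommMonoid M] {f : ℤ → M} {c : ℕ}
    (hf : Function.Periodic f c) (a b : ℤ) :
    ∑ x ∈ Ico a (a + c), f x = ∑ x ∈ Ico b (b + c), f x := by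
  have step : ∀ i : ℤ, ∑ x ∈ Ico (i + 1) (i + 1 + c), f x = ∑ x ∈ Ico i (i + c), f x := by
    intro i
    have two_ways := congrArg (∑ x ∈ ·, f x)
      ((insert_Ico_add_one_left_eq_Ico (show i < i + c + 1 by omega)).trans
        (insert_Ico_right_eq_Ico_add_one (show i ≤ i + c by omega)).symm)
    rw [sum_insert (by simp), sum_insert (by simp), hf] at two_ways
    rw [add_right_comm]
    exact add_left_cancel two_ways
  have from_zero : ∀ i : ℤ, ∑ x ∈ Ico i (i + c), f x = ∑ x ∈ Ico (0 : ℤ) c, f x := by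
    intro i
    induction i using Int.induction_on with
    | zero => rw [zero_add]
    | succ i ih => rw [step, ih]
    | pred i ih => rw [← ih, ← step, sub_add_cancel]
  rw [from_zero a, from_zero b]

lemma sum_Icc_circBinom_succ {d : ℕ} (hd : d ≠ 0) (n : ℕ) {l r : ℤ} (h : l ≤ r) :
    ∑ x ∈ Icc l r, circBinom d (n + 1) x =
      ∑ x ∈ Icc (l - 1) r, circBinom d n x + ∑ x ∈ Icc l (r - 1), circBinom d n x := by
  have shift :
      ∑ x ∈ Icc l r, circBinom d n (x - 1) = ∑ x ∈ Icc (l - 1) (r - 1), circBinom d n x := by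
    rw [show Icc l r = (Icc (l - 1) (r - 1)).map (addRightEmbedding 1) by simp, sum_map]
    simp
  simp only [circBinom_succ hd, sum_add_distrib, shift]
  exact sum_Icc_add_sum_Icc_sub_one _ h

noncomputable def corridorFormula (d n : ℕ) (y : ℤ) : ℤ :=
  ∑ x ∈ Icc ((n - y + 1) / 2) ((n + y + 1) / 2), (circBinom d n x : ℤ) -
    ∑ x ∈ Icc ((n + d - y) / 2) ((n + d + y) / 2), (circBinom d n x : ℤ)

lemma corridorFormula_neg_one (d n : ℕ) : corridorFormula d n (-1) = 0 := by
  rw [corridorFormula, Icc_eq_empty (by omega), Icc_eq_empty (by omega), sum_empty, sub_self]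

lemma corridorFormula_sub_one (d n : ℕ) : corridorFormula d n (d - 1) = 0 := by
  have window : ∀ l r : ℤ, r = l + d - 1 →
      ∑ x ∈ Icc l r, (circBinom d n x : ℤ) = ∑ x ∈ Ico (0 : ℤ) (0 + d), (circBinom d n x : ℤ) := by
    rintro l r rfl
    rw [← Ico_add_one_right_eq_Icc, sub_add_cancel]
    exact ((circBinom_periodic d n).comp Nat.cast).sum_Ico_add_eq l 0
  rw [corridorFormula, window _ _ (by omega), window _ _ (by omega), sub_self]

lemma corridorFormula_zero_left {d : ℕ} (hd : d ≠ 0) {y : ℤ} (hy₀ : 0 ≤ y) (hy : y ≤ d - 2) :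
    corridorFormula d 0 y = 1 := by
  have only_zero : ∀ x : ℤ, -d < x → x < d → (d : ℤ) ∣ x → x = 0 := fun x h₁ h₂ hdvd ↦
    Int.eq_zero_of_abs_lt_dvd hdvd (abs_lt.2 ⟨h₁, h₂⟩)
  simp only [corridorFormula, circBinom_zero_left hd, Nat.cast_ite, Nat.cast_one,
    CharP.cast_eq_zero, zero_sub, zero_add]
  rw [sum_eq_single_of_mem 0 (by simp; omega), sum_eq_zero, if_pos (dvd_zero _), sub_zero]
  · intro x hx
    rw [mem_Icc] at hx
    exact if_neg fun hdvd ↦ (by omega : x ≠ 0) (only_zero x (by omega) (by omega) hdvd)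
  · intro x hx hx0
    rw [mem_Icc] at hx
    exact if_neg fun hdvd ↦ hx0 (only_zero x (by omega) (by omega) hdvd)

lemma corridorFormula_succ {d : ℕ} (hd : d ≠ 0) (n : ℕ) {y : ℤ} (hy : 0 ≤ y) :
    corridorFormula d (n + 1) y = corridorFormula d n (y + 1) + corridorFormula d n (y - 1) := by
  simp only [corridorFormula, ← Nat.cast_sum]
  rw [sum_Icc_circBinom_succ hd n (by omega), sum_Icc_circBinom_succ hd n (by omega)]
  push_cast
  rw [show ((n : ℤ) + 1 - y + 1) / 2 - 1 = (n - (y + 1) + 1) / 2 by omega,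
    show ((n : ℤ) + 1 + y + 1) / 2 - 1 = (n + (y - 1) + 1) / 2 by omega,
    show ((n : ℤ) + 1 + d - y) / 2 - 1 = (n + d - (y + 1)) / 2 by omega,
    show ((n : ℤ) + 1 + d + y) / 2 - 1 = (n + d + (y - 1)) / 2 by omega,
    show ((n : ℤ) + 1 + y + 1) / 2 = (n + (y + 1) + 1) / 2 by omega,
    show ((n : ℤ) + 1 - y + 1) / 2 = (n - (y - 1) + 1) / 2 by omega,
    show ((n : ℤ) + 1 + d + y) / 2 = (n + d + (y + 1)) / 2 by omega,
    show ((n : ℤ) + 1 + d - y) / 2 = (n + d - (y - 1)) / 2 by omega]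
  ring

def IsCorridorWalk (m : ℕ) (z : ℤ) {n : ℕ} (r : Fin n → ℤ) : Prop :=
  (∀ i, r i = 1 ∨ r i = -1) ∧
    ∀ j : Fin n, 0 ≤ z + ∑ i ∈ Iic j, r i ∧ z + ∑ i ∈ Iic j, r i ≤ (m : ℤ)

noncomputable def corridorCountFrom (m n : ℕ) (z : ℤ) : ℕ :=
  Nat.card {r : Fin n → ℤ // IsCorridorWalk m z r}

lemma corridorCount_eq_corridorCountFrom (m n y₀ : ℕ) :
    corridorCount m n y₀ = corridorCountFrom m n y₀ := rfl

instance (m : ℕ) (z : ℤ) (n : ℕ) : Finite {r : Fin n → ℤ // IsCorridorWalk m z r} :=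
  Set.Finite.subset (Set.Finite.pi fun _ ↦ Set.toFinite {1, -1}) fun _ hr i _ ↦ hr.1 i

lemma Fin.sum_Iic_succ {M : Type*} [AddCommMonoid M] {n : ℕ} (f : Fin (n + 1) → M) (j : Fin n) :
    ∑ i ∈ Iic j.succ, f i = f 0 + ∑ i ∈ Iic j, f i.succ := by
  simp only [← filter_ge_eq_Iic, sum_filter, Fin.sum_univ_succ, Fin.zero_le, if_true,
    Fin.succ_le_succ_iff]

lemma Fin.sum_Iic_zero {M : Type*} [AddCommMonoid M] {n : ℕ} (f : Fin (n + 1) → M) :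
    ∑ i ∈ Iic 0, f i = f 0 := by
  simp [← bot_eq_zero, Iic_bot]

lemma isCorridorWalk_cons_iff {m n : ℕ} {z a : ℤ} {s : Fin n → ℤ} :
    IsCorridorWalk m z (Fin.cons a s : Fin (n + 1) → ℤ) ↔
      (a = 1 ∨ a = -1) ∧ (0 ≤ z + a ∧ z + a ≤ m) ∧ IsCorridorWalk m (z + a) s := by
  simp only [IsCorridorWalk, Fin.forall_fin_succ, Fin.cons_zero, Fin.cons_succ, Fin.sum_Iic_succ,
    Fin.sum_Iic_zero, add_assoc]
  tauto

lemma isCorridorWalk_iff_head_tail {m n : ℕ} {z : ℤ} {r : Fin (n + 1) → ℤ} :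
    IsCorridorWalk m z r ↔
      (r 0 = 1 ∨ r 0 = -1) ∧ (0 ≤ z + r 0 ∧ z + r 0 ≤ m) ∧
        IsCorridorWalk m (z + r 0) (Fin.tail r) := by
  conv_lhs => rw [← Fin.cons_self_tail r]
  exact isCorridorWalk_cons_iff

def corridorSteps (m : ℕ) (z : ℤ) : Finset ℤ :=
  {a ∈ ({1, -1} : Finset ℤ) | 0 ≤ z + a ∧ z + a ≤ m}

def corridorWalkSuccEquiv (m n : ℕ) (z : ℤ) :
    {r : Fin (n + 1) → ℤ // IsCorridorWalk m z r} ≃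
      Σ a : corridorSteps m z, {s : Fin n → ℤ // IsCorridorWalk m (z + a) s} where
  toFun r :=
    ⟨⟨r.1 0, mem_filter.2 ⟨by simpa using (isCorridorWalk_iff_head_tail.1 r.2).1,
      (isCorridorWalk_iff_head_tail.1 r.2).2.1⟩⟩,
      ⟨Fin.tail r.1, (isCorridorWalk_iff_head_tail.1 r.2).2.2⟩⟩
  invFun p := ⟨Fin.cons p.1.1 p.2.1, isCorridorWalk_cons_iff.2
    ⟨by simpa using (mem_filter.1 p.1.2).1, (mem_filter.1 p.1.2).2, p.2.2⟩⟩
  left_inv r := Subtype.ext (Fin.cons_self_tail r.1)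
  right_inv _ := Sigma.subtype_ext rfl rfl

lemma corridorCountFrom_succ (m n : ℕ) (z : ℤ) :
    corridorCountFrom m (n + 1) z = ∑ a ∈ corridorSteps m z, corridorCountFrom m n (z + a) := by
  rw [corridorCountFrom, Nat.card_congr (corridorWalkSuccEquiv m n z), Nat.card_sigma]
  exact sum_coe_sort (corridorSteps m z) fun a ↦ corridorCountFrom m n (z + a)

lemma corridorCountFrom_zero (m : ℕ) (z : ℤ) : corridorCountFrom m 0 z = 1 :=
  Nat.card_eq_one_iff_unique.2 ⟨⟨fun _ _ ↦ Subtype.ext (Subsingleton.elim _ _)⟩,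
    ⟨⟨Fin.elim0, fun i ↦ i.elim0, fun j ↦ j.elim0⟩⟩⟩

lemma corridorCountFrom_eq_corridorFormula {d : ℕ} (hd : 2 ≤ d) (n : ℕ) {z : ℤ} (hz₀ : 0 ≤ z)
    (hz : z ≤ d - 2) : (corridorCountFrom (d - 2) n z : ℤ) = corridorFormula d n z := by
  induction n generalizing z with
  | zero => rw [corridorCountFrom_zero, corridorFormula_zero_left (by omega) hz₀ hz, Nat.cast_one]
  | succ n ih =>
    -- a step onto one of the walls `-1`, `d - 1` is not counted, and the formula vanishes there
    have step (a : ℤ) (ha : a = 1 ∨ a = -1) :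
        ((if 0 ≤ z + a ∧ z + a ≤ ((d - 2 : ℕ) : ℤ) then corridorCountFrom (d - 2) n (z + a)
          else 0 : ℕ) : ℤ) = corridorFormula d n (z + a) := by
      split_ifs with h
      · exact ih h.1 (by omega)
      · rcases show z + a = -1 ∨ z + a = d - 1 by omega with h' | h'
        · rw [h', corridorFormula_neg_one, Nat.cast_zero]
        · rw [h', corridorFormula_sub_one, Nat.cast_zero]
    rw [corridorCountFrom_succ, corridorSteps, sum_filter, sum_pair (by norm_num), Nat.cast_add,
      step 1 (by norm_num), step (-1) (by norm_num), ← sub_eq_add_neg,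
      corridorFormula_succ (by omega) n hz₀]

/-- For `d ≥ 2` and `m = d−2`, `c^{(m)}_n = σ_{n,⌊n/2⌋} − σ_{n,⌊(n+d)/2⌋}`, where `σ` is the
(standard, offset `0`) circular Pascal array of order `d`. -/
theorem corridor_eq_circPascal_diff_std (d : ℕ) (hd : 2 ≤ d) (n : ℕ) :
    (corridorCount (d - 2) n 0 : ℤ) =
      (circPascal d 0 n ((n / 2 : ℕ) : ℤ) : ℤ) -
      (circPascal d 0 n (((n + d) / 2 : ℕ) : ℤ) : ℤ) := by
  rw [corridorCount_eq_corridorCountFrom, Nat.cast_zero,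
    corridorCountFrom_eq_corridorFormula hd n le_rfl (by omega), corridorFormula,
    circPascal_zero, circPascal_zero]
  simp only [sub_zero, add_zero, Icc_self, sum_singleton]
  rw [← circBinom_sub d n ((n + 1) / 2)]
  congr 3; omega
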